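/- A pretzel diagram P(a_1, ..., a_n) represents a link with more than one component if and only if either at least two of the entries a_i are even, or n is even and all entries a_i are odd. -/

import Mathlib

/-- One step of traversing the pretzel diagram `P(a_0, …, a_{n-1})`, acting on the `4n`
column endpoints `(i, tb, lr)` (column `i`, top/bottom `tb`, left/right `lr`):
first pass through column `i` (an even column joins top to bottom on the same side,
an odd column joins top to bottom on opposite sides), then travel along the adjacent
horizontal closing arc to the neighbouring column. -/
def pretzelStep (n : ℕ) [NeZero n] (a : Fin n → ℤ) (x : Fin n × Bool × Bool) :
    Fin n × Bool × Bool :=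
  let i := x.1
  let tb := x.2.1
  let lr := x.2.2
  -- pass through column `i`
  let lr' := if Even (a i) then lr else !lr
  -- travel along the top/bottom arc from side `lr'` of column `i`
  if lr' then (i - 1, !tb, false) else (i + 1, !tb, true)

namespace PretzelAux

open Fin.CommRing

variable {n : ℕ} [NeZero n] {a : Fin n → ℤ} {e : Equiv.Perm (Fin n × Bool × Bool)}

lemma step_odd_L (he : ∀ x, e x = pretzelStep n a x) {i : Fin n} (h : ¬ Even (a i)) (tb : Bool) :
    e (i, tb, true) = (i + 1, !tb, true) := by
  rw [he]; simp [pretzelStep, h]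

lemma step_odd_R (he : ∀ x, e x = pretzelStep n a x) {i : Fin n} (h : ¬ Even (a i)) (tb : Bool) :
    e (i, tb, false) = (i - 1, !tb, false) := by
  rw [he]; simp [pretzelStep, h]

lemma step_even_L (he : ∀ x, e x = pretzelStep n a x) {i : Fin n} (h : Even (a i)) (tb : Bool) :
    e (i, tb, true) = (i - 1, !tb, false) := by
  rw [he]; simp [pretzelStep, h]

lemma step_even_R (he : ∀ x, e x = pretzelStep n a x) {i : Fin n} (h : Even (a i)) (tb : Bool) :
    e (i, tb, false) = (i + 1, !tb, true) := by
  rw [he]; simp [pretzelStep, h]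

lemma parity_decide_succ (m : ℕ) :
    decide ((m + 1) % 2 = 1) = !decide (m % 2 = 1) := by
  rw [← decide_not]; exact decide_eq_decide.mpr (by omega)

lemma run_odd_L (he : ∀ x, e x = pretzelStep n a x) :
    ∀ (m : ℕ) (i : Fin n) (tb : Bool), (∀ r : ℕ, r < m → ¬ Even (a (i + (r : Fin n)))) →
    (e ^ m) (i, tb, true) = (i + (m : Fin n), xor (decide (m % 2 = 1)) tb, true) := by
  intro m
  induction m with
  | zero => intro i tb _; simp
  | succ m ih =>
      intro i tb h
      have h0 : ¬ Even (a i) := by simpa using h 0 (Nat.succ_pos m)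
      rw [pow_succ, Equiv.Perm.mul_apply, step_odd_L he h0 tb]
      rw [ih (i + 1) (!tb) (fun r hr => by
        have := h (r + 1) (by omega)
        rwa [show i + ((r + 1 : ℕ) : Fin n) = i + 1 + (r : Fin n) by push_cast; ring] at this)]
      rw [parity_decide_succ]
      refine Prod.ext ?_ (Prod.ext ?_ rfl)
      · show i + 1 + (m : Fin n) = i + ((m + 1 : ℕ) : Fin n)
        push_cast; ring
      · show xor (decide (m % 2 = 1)) (!tb) = xor (!decide (m % 2 = 1)) tb
        cases tb <;> simp

lemma run_odd_R (he : ∀ x, e x = pretzelStep n a x) :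
    ∀ (m : ℕ) (i : Fin n) (tb : Bool), (∀ r : ℕ, r < m → ¬ Even (a (i - (r : Fin n)))) →
    (e ^ m) (i, tb, false) = (i - (m : Fin n), xor (decide (m % 2 = 1)) tb, false) := by
  intro m
  induction m with
  | zero => intro i tb _; simp
  | succ m ih =>
      intro i tb h
      have h0 : ¬ Even (a i) := by simpa using h 0 (Nat.succ_pos m)
      rw [pow_succ, Equiv.Perm.mul_apply, step_odd_R he h0 tb]
      rw [ih (i - 1) (!tb) (fun r hr => by
        have := h (r + 1) (by omega)
        rwa [show i - ((r + 1 : ℕ) : Fin n) = i - 1 - (r : Fin n) by push_cast; ring] at this)]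
      rw [parity_decide_succ]
      refine Prod.ext ?_ (Prod.ext ?_ rfl)
      · show i - 1 - (m : Fin n) = i - ((m + 1 : ℕ) : Fin n)
        push_cast; ring
      · show xor (decide (m % 2 = 1)) (!tb) = xor (!decide (m % 2 = 1)) tb
        cases tb <;> simp

variable {β γ : Type*} [Fintype β] [DecidableEq β]

omit [NeZero n] in
lemma cycleType_card_eq (f : Equiv.Perm β) :
    f.cycleType.card = f.cycleFactorsFinset.card := by
  rw [Equiv.Perm.cycleType_def]; exact Multiset.card_map _ _

omit [NeZero n] in
lemma invariant_of_sameCycle (f : Equiv.Perm β) (Φ : β → γ)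
    (hΦ : ∀ x, Φ (f x) = Φ x) {x y : β} (h : f.SameCycle x y) : Φ x = Φ y := by
  obtain ⟨i, hi⟩ := h
  have hinv : ∀ z, Φ (f⁻¹ z) = Φ z := by
    intro z
    have := hΦ (f⁻¹ z)
    rw [show f (f⁻¹ z) = z from f.apply_symm_apply z] at this
    exact this.symm
  have key : ∀ (i : ℤ) (z : β), Φ ((f ^ i) z) = Φ z := by
    intro i
    induction i using Int.induction_on with
    | zero => simp
    | succ k ih =>
        intro z
        have : (f ^ ((k : ℤ) + 1)) z = (f ^ (k : ℤ)) (f z) := by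
          rw [zpow_add_one]
          simp [Equiv.Perm.mul_apply]
        rw [this, ih, hΦ]
    | pred k ih =>
        intro z
        have : (f ^ (-(k : ℤ) - 1)) z = (f ^ (-(k : ℤ))) (f⁻¹ z) := by
          rw [zpow_sub_one]
          simp [Equiv.Perm.mul_apply]
        rw [this, ih, hinv]
  rw [← hi, key]

omit [NeZero n] in
lemma not_sameCycle_of_invariant (f : Equiv.Perm β) (Φ : β → γ)
    (hΦ : ∀ x, Φ (f x) = Φ x) {x y : β} (hxy : Φ x ≠ Φ y) : ¬ f.SameCycle x y :=
  fun h => hxy (invariant_of_sameCycle f Φ hΦ h)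

omit [NeZero n] in
lemma sameCycle_of_pow {f : Equiv.Perm β} {x y : β} (m : ℕ) (h : (f ^ m) x = y) :
    f.SameCycle x y := ⟨(m : ℤ), by rwa [zpow_natCast]⟩

omit [NeZero n] in
lemma cycleCount_le_two (f : Equiv.Perm β) (x y : β)
    (h : ∀ z : β, f.SameCycle x z ∨ f.SameCycle y z) :
    f.cycleType.card ≤ 2 := by
  rw [cycleType_card_eq]
  have hsub : f.cycleFactorsFinset ⊆ {f.cycleOf x, f.cycleOf y} := by
    intro g hg
    have hc : g.IsCycle := (Equiv.Perm.mem_cycleFactorsFinset_iff.mp hg).1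
    obtain ⟨z, hz, -⟩ := hc
    have hzs : z ∈ g.support := Equiv.Perm.mem_support.mpr hz
    have hgz : g = f.cycleOf z := Equiv.Perm.cycle_is_cycleOf hzs hg
    rcases h z with hsc | hsc
    · have := hsc.cycleOf_eq
      simp [hgz, ← this]
    · have := hsc.cycleOf_eq
      simp [hgz, ← this]
  calc f.cycleFactorsFinset.card ≤ ({f.cycleOf x, f.cycleOf y} : Finset (Equiv.Perm β)).card :=
        Finset.card_le_card hsub
    _ ≤ 2 := Finset.card_insert_le _ _ |>.trans (by simp)

omit [NeZero n] in
lemma sameCycle_of_cycleOf_eq {f : Equiv.Perm β} {x y : β} (hx : f x ≠ x)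
    (h : f.cycleOf x = f.cycleOf y) : f.SameCycle y x := by
  have hxs : x ∈ (f.cycleOf x).support :=
    Equiv.Perm.mem_support_cycleOf_iff.mpr ⟨Equiv.Perm.SameCycle.refl _ _, Equiv.Perm.mem_support.mpr hx⟩
  rw [h] at hxs
  exact (Equiv.Perm.mem_support_cycleOf_iff.mp hxs).1

omit [NeZero n] in
lemma four_le_cycleCount (f : Equiv.Perm β) (x : Fin 4 → β)
    (hfix : ∀ i, f (x i) ≠ x i)
    (hsc : ∀ i j, i ≠ j → ¬ f.SameCycle (x i) (x j)) :
    4 ≤ f.cycleType.card := by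
  rw [cycleType_card_eq]
  have : (Finset.univ : Finset (Fin 4)).card ≤ f.cycleFactorsFinset.card := by
    apply Finset.card_le_card_of_injOn (fun i => f.cycleOf (x i))
    · intro i _
      exact Equiv.Perm.cycleOf_mem_cycleFactorsFinset_iff.mpr (Equiv.Perm.mem_support.mpr (hfix i))
    · intro i _ j _ hij
      by_contra hne
      simp only at hij
      exact hsc j i (Ne.symm hne) (sameCycle_of_cycleOf_eq (hfix i) hij)
  simpa using this

lemma reachL_D (he : ∀ x, e x = pretzelStep n a x) {j : Fin n}
    (hother : ∀ i, i ≠ j → ¬ Even (a i)) (i : Fin n) (tb : Bool) :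
    ∃ c : Bool, e.SameCycle (i, tb, true) ((j : Fin n), c, true) := by
  set m : ℕ := (j - i).val with hm
  have hcond : ∀ r : ℕ, r < m → ¬ Even (a (i + (r : Fin n))) := by
    intro r hr
    apply hother
    intro heq
    have h1 : (r : Fin n) = j - i := by
      rw [← heq]; ring
    have h2 : r = m := by
      rw [hm, ← h1, Fin.val_cast_of_lt (lt_trans hr (j - i).isLt)]
    omega
  refine ⟨xor (decide (m % 2 = 1)) tb, sameCycle_of_pow m ?_⟩
  rw [run_odd_L he m i tb hcond, Fin.cast_val_eq_self, add_comm, sub_add_cancel]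

lemma reachR_D (he : ∀ x, e x = pretzelStep n a x) {j : Fin n}
    (hother : ∀ i, i ≠ j → ¬ Even (a i)) (i : Fin n) (tb : Bool) :
    ∃ c : Bool, e.SameCycle (i, tb, false) ((j : Fin n), c, false) := by
  set m : ℕ := (i - j).val with hm
  have hcond : ∀ r : ℕ, r < m → ¬ Even (a (i - (r : Fin n))) := by
    intro r hr
    apply hother
    intro heq
    have h1 : (r : Fin n) = i - j := by
      rw [← heq]; ring
    have h2 : r = m := by
      rw [hm, ← h1, Fin.val_cast_of_lt (lt_trans hr (i - j).isLt)]
    omega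
  refine ⟨xor (decide (m % 2 = 1)) tb, sameCycle_of_pow m ?_⟩
  rw [run_odd_R he m i tb hcond, Fin.cast_val_eq_self, sub_sub_cancel]

lemma coverage_D (he : ∀ x, e x = pretzelStep n a x) {j : Fin n}
    (hj : Even (a j)) (hother : ∀ i, i ≠ j → ¬ Even (a i)) :
    ∀ z, e.SameCycle ((j : Fin n), true, true) z ∨ e.SameCycle ((j : Fin n), false, true) z := by
  have main : ∀ z, ∃ c : Bool, e.SameCycle z ((j : Fin n), c, true) := by
    rintro ⟨i, tb, lr⟩
    cases lr with
    | true =>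
        obtain ⟨c, hc⟩ := reachL_D he hother i tb
        exact ⟨c, hc⟩
    | false =>
        obtain ⟨c, hc⟩ := reachR_D he hother i tb
        have hstep : e.SameCycle ((j : Fin n), c, false) (j + 1, !c, true) :=
          sameCycle_of_pow 1 (by simpa using step_even_R he hj c)
        obtain ⟨c', hc'⟩ := reachL_D he hother (j + 1) (!c)
        exact ⟨c', (hc.trans hstep).trans hc'⟩
  intro z
  obtain ⟨c, hc⟩ := main z
  cases c with
  | true => exact Or.inl hc.symm
  | false => exact Or.inr hc.symm

lemma coverage_C (he : ∀ x, e x = pretzelStep n a x)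
    (hall : ∀ i, ¬ Even (a i)) (hn : ¬ Even n) :
    ∀ z, e.SameCycle ((0 : Fin n), true, true) z ∨ e.SameCycle ((0 : Fin n), false, false) z := by
  have hmerge_L : e.SameCycle ((0 : Fin n), false, true) ((0 : Fin n), true, true) := by
    apply sameCycle_of_pow n
    rw [run_odd_L he n 0 false (fun r _ => hall _)]
    have hn2 : n % 2 = 1 := by
      rcases Nat.even_or_odd n with h | h
      · exact absurd h hn
      · exact Nat.odd_iff.mp h
    simp [hn2, Fin.natCast_self]
  have hmerge_R : e.SameCycle ((0 : Fin n), true, false) ((0 : Fin n), false, false) := by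
    apply sameCycle_of_pow n
    rw [run_odd_R he n 0 true (fun r _ => hall _)]
    have hn2 : n % 2 = 1 := by
      rcases Nat.even_or_odd n with h | h
      · exact absurd h hn
      · exact Nat.odd_iff.mp h
    simp [hn2, Fin.natCast_self]
  rintro ⟨i, tb, lr⟩
  cases lr with
  | true =>
      left
      have hrun := run_odd_L he (-i : Fin n).val i tb (fun r _ => hall _)
      rw [Fin.cast_val_eq_self] at hrun
      have h0 : i + -i = 0 := by ring
      rw [h0] at hrun
      have h1 : e.SameCycle (i, tb, true)
          ((0 : Fin n), xor (decide ((-i : Fin n).val % 2 = 1)) tb, true) :=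
        sameCycle_of_pow _ hrun
      cases hx : xor (decide ((-i : Fin n).val % 2 = 1)) tb
      · rw [hx] at h1
        exact (h1.trans hmerge_L).symm
      · rw [hx] at h1
        exact h1.symm
  | false =>
      right
      have hrun := run_odd_R he i.val i tb (fun r _ => hall _)
      rw [Fin.cast_val_eq_self] at hrun
      have h0 : i - i = 0 := by ring
      rw [h0] at hrun
      have h1 : e.SameCycle (i, tb, false)
          ((0 : Fin n), xor (decide (i.val % 2 = 1)) tb, false) :=
        sameCycle_of_pow _ hrun
      cases hx : xor (decide (i.val % 2 = 1)) tb
      · rw [hx] at h1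
        exact h1.symm
      · rw [hx] at h1
        exact (h1.trans hmerge_R).symm

lemma val_add_one_of (hn : 1 < n) (x : Fin n) : (x + 1).val = (x.val + 1) % n := by
  rw [Fin.val_add, Fin.val_one', Nat.mod_eq_of_lt hn]

lemma val_pred (hn : 1 < n) (x : Fin n) : ((x - 1).val + 1) % n = x.val := by
  rw [← val_add_one_of hn, sub_add_cancel]

omit [NeZero n] in
lemma mod_cases {x : ℕ} (hx : x < 2 * n) : x % n = if x < n then x else x - n := by
  by_cases h : x < n
  · rw [if_pos h, Nat.mod_eq_of_lt h]
  · rw [if_neg h, Nat.mod_eq_sub_mod (le_of_not_gt h), Nat.mod_eq_of_lt (by omega)]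

/-- Invariant for the all-odd, `n` even case. -/
def ΦB : Fin n × Bool × Bool → Bool × Bool := fun z =>
  (z.2.2, xor (decide (z.1.val % 2 = 1)) z.2.1)

lemma invariant_B (he : ∀ x, e x = pretzelStep n a x)
    (hall : ∀ i, ¬ Even (a i)) (hn : Even n) :
    ∀ x, ΦB (e x) = ΦB x := by
  have hn1 : 1 < n := by
    have h0 : 0 < n := Nat.pos_of_ne_zero (NeZero.ne n)
    rcases hn with ⟨k, hk⟩; omega
  have h2 : 2 ∣ n := hn.two_dvd
  rintro ⟨i, tb, lr⟩
  cases lr with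
  | true =>
      rw [step_odd_L he (hall i)]
      simp only [ΦB]
      refine Prod.ext rfl ?_
      show xor (decide ((i + 1).val % 2 = 1)) (!tb) = xor (decide (i.val % 2 = 1)) tb
      have hpar : (i + 1).val % 2 = (i.val + 1) % 2 := by
        rw [val_add_one_of hn1, Nat.mod_mod_of_dvd _ h2]
      have : decide ((i + 1).val % 2 = 1) = !decide (i.val % 2 = 1) := by
        rw [← decide_not]
        exact decide_eq_decide.mpr (by omega)
      rw [this]; cases tb <;> simp
  | false =>
      rw [step_odd_R he (hall i)]
      simp only [ΦB]
      refine Prod.ext rfl ?_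
      show xor (decide ((i - 1).val % 2 = 1)) (!tb) = xor (decide (i.val % 2 = 1)) tb
      have hpar : ((i - 1).val + 1) % n % 2 = ((i - 1).val + 1) % 2 :=
        Nat.mod_mod_of_dvd _ h2
      rw [val_pred hn1] at hpar
      have : decide ((i - 1).val % 2 = 1) = !decide (i.val % 2 = 1) := by
        rw [← decide_not]
        exact decide_eq_decide.mpr (by omega)
      rw [this]; cases tb <;> simp


lemma succ_val_cases (hn1 : 1 < n) (x j : Fin n) :
    ((x + 1) - j).val = (x - j).val + 1 ∨ ((x - j).val + 1 = n ∧ ((x + 1) - j).val = 0) := by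
  have h1 : (x + 1) - j = (x - j) + 1 := by ring
  rw [h1, val_add_one_of hn1, mod_cases (by have := (x - j).isLt; omega)]
  by_cases h : (x - j).val + 1 < n
  · left; rw [if_pos h]
  · right
    have hlt := (x - j).isLt
    exact ⟨by omega, by rw [if_neg h]; omega⟩

lemma pred_val_cases (hn1 : 1 < n) (x j : Fin n) :
    ((x - 1) - j).val + 1 = (x - j).val ∨ (((x - 1) - j).val + 1 = n ∧ (x - j).val = 0) := by
  have h1 : ((x - 1) - j) + 1 = x - j := by ring
  have h2 := val_add_one_of hn1 ((x - 1) - j)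
  rw [h1, mod_cases (by have := ((x - 1) - j).isLt; omega)] at h2
  by_cases h : ((x - 1) - j).val + 1 < n
  · left; rw [if_pos h] at h2; omega
  · right
    have := ((x - 1) - j).isLt
    rw [if_neg h] at h2; omega

lemma sub_val_eq_zero_iff (x j : Fin n) : (x - j).val = 0 ↔ x = j := by
  rw [show ((x - j).val = 0 ↔ x - j = 0) from ⟨fun h => Fin.ext (by simp [h]), fun h => by simp [h]⟩,
    sub_eq_zero]

lemma rel_pq (i j₁ j₂ : Fin n) : ((i - j₂).val + (j₂ - j₁).val) % n = (i - j₁).val := by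
  rw [← Fin.val_add, sub_add_sub_cancel]

/-- Invariant for the case of (at least) two even columns `j₁ ≠ j₂`. -/
def ΦA (j₁ j₂ : Fin n) (z : Fin n × Bool × Bool) : Bool × Bool :=
  if z.2.2 = true then
    (decide (1 ≤ (z.1 - j₁).val ∧ (z.1 - j₁).val ≤ (j₂ - j₁).val),
     xor (decide ((if 1 ≤ (z.1 - j₁).val ∧ (z.1 - j₁).val ≤ (j₂ - j₁).val then (z.1 - j₁).val
        else (z.1 - j₂).val) % 2 = 1)) z.2.1)
  else
    (decide ((z.1 - j₁).val < (j₂ - j₁).val),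
     xor (decide ((if (z.1 - j₁).val < (j₂ - j₁).val then (z.1 - j₁).val
        else (z.1 - j₂).val) % 2 = 1)) z.2.1)

lemma ΦA_L (j₁ j₂ i : Fin n) (tb : Bool) : ΦA j₁ j₂ (i, tb, true) =
    (decide (1 ≤ (i - j₁).val ∧ (i - j₁).val ≤ (j₂ - j₁).val),
     xor (decide ((if 1 ≤ (i - j₁).val ∧ (i - j₁).val ≤ (j₂ - j₁).val then (i - j₁).val
        else (i - j₂).val) % 2 = 1)) tb) := rfl

lemma ΦA_R (j₁ j₂ i : Fin n) (tb : Bool) : ΦA j₁ j₂ (i, tb, false) =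
    (decide ((i - j₁).val < (j₂ - j₁).val),
     xor (decide ((if (i - j₁).val < (j₂ - j₁).val then (i - j₁).val
        else (i - j₂).val) % 2 = 1)) tb) := rfl

lemma invariant_A (he : ∀ x, e x = pretzelStep n a x) {j₁ j₂ : Fin n}
    (hj1 : Even (a j₁)) (hj2 : Even (a j₂)) (hne : j₁ ≠ j₂) :
    ∀ x, ΦA j₁ j₂ (e x) = ΦA j₁ j₂ x := by
  have hn1 : 1 < n := by
    have h1 := j₁.isLt; have h2 := j₂.isLt
    by_contra hle; push_neg at hle
    exact hne (Fin.ext (by omega))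
  rintro ⟨i, tb, lr⟩
  have hmn : (j₂ - j₁).val < n := (j₂ - j₁).isLt
  have hpn : (i - j₁).val < n := (i - j₁).isLt
  have hqn : (i - j₂).val < n := (i - j₂).isLt
  have hm0 : 0 < (j₂ - j₁).val := by
    rcases Nat.eq_zero_or_pos (j₂ - j₁).val with h | h
    · exact absurd ((sub_val_eq_zero_iff j₂ j₁).mp h) (Ne.symm hne)
    · exact h
  have hrel : (i - j₂).val + (j₂ - j₁).val = (i - j₁).val ∨
      (i - j₂).val + (j₂ - j₁).val = (i - j₁).val + n := by
    have h := rel_pq i j₁ j₂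
    rw [mod_cases (by omega)] at h
    by_cases h2 : (i - j₂).val + (j₂ - j₁).val < n
    · left; rw [if_pos h2] at h; omega
    · right; rw [if_neg h2] at h; omega
  by_cases hev : Even (a i)
  · cases lr with
    | true =>
      rw [step_even_L he hev, ΦA_R, ΦA_L]
      have hP := pred_val_cases hn1 i j₁
      have hQ := pred_val_cases hn1 i j₂
      have hp'n : ((i - 1) - j₁).val < n := Fin.isLt _
      have hq'n : ((i - 1) - j₂).val < n := Fin.isLt _
      have hS : (((i - 1) - j₁).val < (j₂ - j₁).val) ↔
          (1 ≤ (i - j₁).val ∧ (i - j₁).val ≤ (j₂ - j₁).val) := by omega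
      refine Prod.ext (decide_eq_decide.mpr hS) ?_
      by_cases h : 1 ≤ (i - j₁).val ∧ (i - j₁).val ≤ (j₂ - j₁).val
      · rw [if_pos h, if_pos (hS.mpr h)]
        rw [show decide (((i - 1) - j₁).val % 2 = 1) = !decide ((i - j₁).val % 2 = 1) from by
          rw [← decide_not]; exact decide_eq_decide.mpr (by omega)]
        cases tb <;> simp
      · rw [if_neg h, if_neg (fun hx => h (hS.mp hx))]
        rw [show decide (((i - 1) - j₂).val % 2 = 1) = !decide ((i - j₂).val % 2 = 1) from by
          rw [← decide_not]; exact decide_eq_decide.mpr (by omega)]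
        cases tb <;> simp
    | false =>
      rw [step_even_R he hev, ΦA_L, ΦA_R]
      have hP := succ_val_cases hn1 i j₁
      have hQ := succ_val_cases hn1 i j₂
      have hp'n : ((i + 1) - j₁).val < n := Fin.isLt _
      have hq'n : ((i + 1) - j₂).val < n := Fin.isLt _
      have hS : (1 ≤ ((i + 1) - j₁).val ∧ ((i + 1) - j₁).val ≤ (j₂ - j₁).val) ↔
          ((i - j₁).val < (j₂ - j₁).val) := by omega
      refine Prod.ext (decide_eq_decide.mpr hS) ?_
      by_cases h : (i - j₁).val < (j₂ - j₁).val
      · rw [if_pos h, if_pos (hS.mpr h)]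
        rw [show decide (((i + 1) - j₁).val % 2 = 1) = !decide ((i - j₁).val % 2 = 1) from by
          rw [← decide_not]; exact decide_eq_decide.mpr (by omega)]
        cases tb <;> simp
      · rw [if_neg h, if_neg (fun hx => h (hS.mp hx))]
        rw [show decide (((i + 1) - j₂).val % 2 = 1) = !decide ((i - j₂).val % 2 = 1) from by
          rw [← decide_not]; exact decide_eq_decide.mpr (by omega)]
        cases tb <;> simp
  · have hip : i ≠ j₁ := fun h => hev (h ▸ hj1)
    have hiq : i ≠ j₂ := fun h => hev (h ▸ hj2)
    have hp0 : (i - j₁).val ≠ 0 := fun h => hip ((sub_val_eq_zero_iff i j₁).mp h)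
    have hq0 : (i - j₂).val ≠ 0 := fun h => hiq ((sub_val_eq_zero_iff i j₂).mp h)
    cases lr with
    | true =>
      rw [step_odd_L he hev, ΦA_L, ΦA_L]
      have hP := succ_val_cases hn1 i j₁
      have hQ := succ_val_cases hn1 i j₂
      have hp'n : ((i + 1) - j₁).val < n := Fin.isLt _
      have hq'n : ((i + 1) - j₂).val < n := Fin.isLt _
      have hS : (1 ≤ ((i + 1) - j₁).val ∧ ((i + 1) - j₁).val ≤ (j₂ - j₁).val) ↔
          (1 ≤ (i - j₁).val ∧ (i - j₁).val ≤ (j₂ - j₁).val) := by omega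
      refine Prod.ext (decide_eq_decide.mpr hS) ?_
      by_cases h : 1 ≤ (i - j₁).val ∧ (i - j₁).val ≤ (j₂ - j₁).val
      · rw [if_pos h, if_pos (hS.mpr h)]
        rw [show decide (((i + 1) - j₁).val % 2 = 1) = !decide ((i - j₁).val % 2 = 1) from by
          rw [← decide_not]; exact decide_eq_decide.mpr (by omega)]
        cases tb <;> simp
      · rw [if_neg h, if_neg (fun hx => h (hS.mp hx))]
        rw [show decide (((i + 1) - j₂).val % 2 = 1) = !decide ((i - j₂).val % 2 = 1) from by
          rw [← decide_not]; exact decide_eq_decide.mpr (by omega)]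
        cases tb <;> simp
    | false =>
      rw [step_odd_R he hev, ΦA_R, ΦA_R]
      have hP := pred_val_cases hn1 i j₁
      have hQ := pred_val_cases hn1 i j₂
      have hp'n : ((i - 1) - j₁).val < n := Fin.isLt _
      have hq'n : ((i - 1) - j₂).val < n := Fin.isLt _
      have hS : (((i - 1) - j₁).val < (j₂ - j₁).val) ↔
          ((i - j₁).val < (j₂ - j₁).val) := by omega
      refine Prod.ext (decide_eq_decide.mpr hS) ?_
      by_cases h : (i - j₁).val < (j₂ - j₁).val
      · rw [if_pos h, if_pos (hS.mpr h)]
        rw [show decide (((i - 1) - j₁).val % 2 = 1) = !decide ((i - j₁).val % 2 = 1) from by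
          rw [← decide_not]; exact decide_eq_decide.mpr (by omega)]
        cases tb <;> simp
      · rw [if_neg h, if_neg (fun hx => h (hS.mp hx))]
        rw [show decide (((i - 1) - j₂).val % 2 = 1) = !decide ((i - j₂).val % 2 = 1) from by
          rw [← decide_not]; exact decide_eq_decide.mpr (by omega)]
        cases tb <;> simp


lemma no_fixed (he : ∀ x, e x = pretzelStep n a x) (x : Fin n × Bool × Bool) : e x ≠ x := by
  obtain ⟨i, tb, lr⟩ := x
  intro h
  rw [he] at h
  simp only [pretzelStep] at h
  split at h <;> split at h <;> simp_all

lemma lower_B (he : ∀ x, e x = pretzelStep n a x)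
    (hall : ∀ i, ¬ Even (a i)) (hn : Even n) : 4 ≤ e.cycleType.card := by
  have hinv := invariant_B he hall hn
  have hval : ∀ tb lr, ΦB ((0 : Fin n), tb, lr) = (lr, tb) := by
    intro tb lr
    simp only [ΦB]
    have h0 : ((0 : Fin n)).val % 2 = 0 := by
      have : ((0 : Fin n)).val = 0 := rfl
      omega
    simp [h0]
  apply four_le_cycleCount e
    ![((0 : Fin n), false, true), ((0 : Fin n), true, true),
      ((0 : Fin n), false, false), ((0 : Fin n), true, false)]
  · intro i; fin_cases i <;> exact no_fixed he _
  · intro i j hij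
    apply not_sameCycle_of_invariant e ΦB hinv
    fin_cases i <;> fin_cases j <;> simp_all [hval]

lemma lower_A (he : ∀ x, e x = pretzelStep n a x) {j₁ j₂ : Fin n}
    (hj1 : Even (a j₁)) (hj2 : Even (a j₂)) (hne : j₁ ≠ j₂) : 4 ≤ e.cycleType.card := by
  have hinv := invariant_A he hj1 hj2 hne
  have hm0 : 0 < (j₂ - j₁).val := by
    rcases Nat.eq_zero_or_pos (j₂ - j₁).val with h | h
    · exact absurd ((sub_val_eq_zero_iff j₂ j₁).mp h) (Ne.symm hne)
    · exact h
  have hS : 1 ≤ (j₂ - j₁).val ∧ (j₂ - j₁).val ≤ (j₂ - j₁).val := ⟨hm0, le_refl _⟩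
  have hA : ∀ tb, ΦA j₁ j₂ (j₂, tb, true) =
      (true, xor (decide ((j₂ - j₁).val % 2 = 1)) tb) := by
    intro tb
    rw [ΦA_L]
    exact Prod.ext (decide_eq_true hS) (by rw [if_pos hS])
  have hz : (j₁ - j₁).val = 0 := by simp
  have hT : ¬(1 ≤ (j₁ - j₁).val ∧ (j₁ - j₁).val ≤ (j₂ - j₁).val) := by omega
  have hB : ∀ tb, ΦA j₁ j₂ (j₁, tb, true) =
      (false, xor (decide ((j₁ - j₂).val % 2 = 1)) tb) := by
    intro tb
    rw [ΦA_L]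
    exact Prod.ext (decide_eq_false hT) (by rw [if_neg hT])
  apply four_le_cycleCount e ![(j₂, false, true), (j₂, true, true), (j₁, false, true), (j₁, true, true)]
  · intro i; fin_cases i <;> exact no_fixed he _
  · intro i j hij
    apply not_sameCycle_of_invariant e (ΦA j₁ j₂) hinv
    fin_cases i <;> fin_cases j <;> simp_all [hA, hB]

end PretzelAux

/-- A pretzel diagram `P(a_1, …, a_n)` represents a link with more than one component iff
at least two entries are even, or `n` is even and all entries are odd.  The number of
components is the number of cycles of the traversal permutation divided by two (each
component is traversed once in each direction). -/
theorem stmt13 (n : ℕ) [NeZero n] (a : Fin n → ℤ)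
    (e : Equiv.Perm (Fin n × Bool × Bool)) (he : ∀ x, e x = pretzelStep n a x) :
    1 < e.cycleType.card / 2 ↔
      2 ≤ (Finset.univ.filter fun i => Even (a i)).card ∨
        (Even n ∧ ∀ i, Odd (a i)) := by
  open PretzelAux in
  constructor
  · intro h4
    by_contra hcon
    push_neg at hcon
    obtain ⟨hk, hodd⟩ := hcon
    by_cases hex : ∃ j, Even (a j)
    · obtain ⟨j, hj⟩ := hex
      have hother : ∀ i, i ≠ j → ¬ Even (a i) := by
        intro i hij hevi
        have h1 : 1 < (Finset.univ.filter fun i => Even (a i)).card :=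
          Finset.one_lt_card.mpr ⟨i, by simp [hevi], j, by simp [hj], hij⟩
        omega
      have := cycleCount_le_two e _ _ (coverage_D he hj hother)
      omega
    · push_neg at hex
      have hnodd : ¬ Even n := by
        intro hn
        obtain ⟨i, hi⟩ := hodd hn
        rcases Int.even_or_odd (a i) with h | h
        · exact hex i h
        · exact hi h
      have := cycleCount_le_two e _ _ (coverage_C he hex hnodd)
      omega
  · rintro (h2 | ⟨hn, hodd⟩)
    · obtain ⟨j₁, hj₁, j₂, hj₂, hne⟩ :=
        Finset.one_lt_card.mp (by omega : 1 < (Finset.univ.filter fun i => Even (a i)).card)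
      rw [Finset.mem_filter] at hj₁ hj₂
      have := lower_A he hj₁.2 hj₂.2 hne
      omega
    · have := lower_B he (fun i => Int.not_even_iff_odd.mpr (hodd i)) hn
      omega
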